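/- Let L = L_I ∪ L_U be a finite alphabet with L_I ∩ L_U = ∅. Let S be a deterministic IOLTS over L without τ-transitions whose state type has cardinality n, and let m ≥ 1. Then there exists a finite set of words T ⊆ L* (a finite complete test suite) such that for every IOLTS I over L without τ-transitions whose state type has cardinality at most m: I ioco S if and only if otr(I) ∩ T = ∅. -/

import Mathlib

/-- Paths of a τ-free LTS: `LPath step s σ q` means there is a path from `s`
to `q` labeled by the word `σ`. -/
inductive LPath {S L : Type*} (step : S → L → S → Prop) : S → List L → S → Prop
  | refl (s : S) : LPath step s [] s
  | cons {s r q : S} {l : L} {σ : List L} :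
      step s l r → LPath step r σ q → LPath step s (l :: σ) q

/-- Trace language of a τ-free LTS with initial state `s0`. -/
def otr {S L : Type*} (step : S → L → S → Prop) (s0 : S) : Set (List L) :=
  {σ | ∃ q, LPath step s0 σ q}

/-- `s after σ`: the set of states reachable from `s` via the word `σ`. -/
def after {S L : Type*} (step : S → L → S → Prop) (s : S) (σ : List L) : Set S :=
  {q | LPath step s σ q}

/-- `out(Q')`: the set of output labels enabled in some state of `Q'`. -/
def outOf {S L : Type*} (LU : Set L) (step : S → L → S → Prop) (Q' : Set S) :
    Set L :=
  {x | x ∈ LU ∧ ∃ q ∈ Q', ∃ q', step q x q'}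

/-!
A failure of `I ioco S` is witnessed by a trace `σ ++ [x]` of `I` with `σ ∈ otr(S)` and `x` an
output that `S` does not allow after `σ`. Whether such a witness exists depends on `σ` only
through the pair `(S after σ, I after σ)`, which is the state reached by `σ` in the product of the
two subset automata. By the pumping lemma every state of that automaton is reached by a word
shorter than its number of states, at most `2 ^ |S| * 2 ^ m`, so the failure witnesses of bounded
length form a complete test suite.
-/

section

variable {S Q L : Type*}

def stepNFA (step : S → L → S → Prop) : NFA L S where
  step s l := {s' | step s l s'}
  start := ∅
  accept := ∅

theorem after_eq_evalFrom (step : S → L → S → Prop) (s : S) (σ : List L) :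
    after step s σ = (stepNFA step).evalFrom {s} σ := by
  ext q
  induction σ generalizing s with
  | nil =>
    simp only [after, NFA.evalFrom_nil, Set.mem_singleton_iff]
    exact ⟨fun h => by cases h; rfl, fun h => h ▸ LPath.refl q⟩
  | cons l σ ih =>
    rw [NFA.evalFrom_cons, NFA.stepSet_singleton, NFA.mem_evalFrom_iff_exists]
    constructor
    · rintro (_ | ⟨hs, hr⟩)
      exact ⟨_, hs, (ih _).1 hr⟩
    · rintro ⟨r, hs, hr⟩
      exact LPath.cons hs ((ih r).2 hr)

theorem mem_otr_iff_nonempty_after {step : S → L → S → Prop} {s : S} {σ : List L} :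
    σ ∈ otr step s ↔ (after step s σ).Nonempty :=
  Iff.rfl

theorem append_singleton_mem_otr_iff {step : S → L → S → Prop} {s : S} {σ : List L} {x : L} :
    σ ++ [x] ∈ otr step s ↔ ∃ r ∈ after step s σ, ∃ q, step r x q := by
  simp only [mem_otr_iff_nonempty_after, after_eq_evalFrom, NFA.evalFrom_append,
    NFA.evalFrom_singleton, Set.Nonempty, NFA.mem_stepSet]
  exact ⟨fun ⟨q, r, hr, hq⟩ => ⟨r, hr, q, hq⟩, fun ⟨r, hr, q, hq⟩ => ⟨q, r, hr, hq⟩⟩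

theorem DFA.exists_length_lt_card_evalFrom_eq {α σ : Type*} [Fintype σ] (M : DFA α σ) (s : σ)
    (x : List α) : ∃ y : List α, y.length < Fintype.card σ ∧ M.evalFrom s y = M.evalFrom s x := by
  induction hx : x.length using Nat.strong_induction_on generalizing x with
  | _ k ih =>
    by_cases hlt : x.length < Fintype.card σ
    · exact ⟨x, hlt, rfl⟩
    obtain ⟨q, a, b, c, rfl, -, hb, ha, hloop, hc⟩ := M.evalFrom_split (s := s) (not_lt.1 hlt) rfl
    have hcut : M.evalFrom s (a ++ c) = M.evalFrom s (a ++ b ++ c) := by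
      simp only [DFA.evalFrom_of_append, ha, hloop]
    have hshorter : (a ++ c).length < k := by
      have := List.length_pos_iff.2 hb
      simp only [List.length_append] at hx ⊢
      omega
    obtain ⟨y, hy, hyac⟩ := ih _ hshorter (a ++ c) rfl
    exact ⟨y, hy, hyac.trans hcut⟩

def afterPairDFA (stepS : S → L → S → Prop) (stepI : Q → L → Q → Prop) :
    DFA L (Set S × Set Q) where
  step A l := ((stepNFA stepS).stepSet A.1 l, (stepNFA stepI).stepSet A.2 l)
  start := (∅, ∅)
  accept := ∅

theorem afterPairDFA_evalFrom (stepS : S → L → S → Prop) (stepI : Q → L → Q → Prop)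
    (A : Set S) (B : Set Q) (σ : List L) :
    (afterPairDFA stepS stepI).evalFrom (A, B) σ =
      ((stepNFA stepS).evalFrom A σ, (stepNFA stepI).evalFrom B σ) := by
  induction σ generalizing A B with
  | nil => rfl
  | cons l σ ih => exact ih _ _

theorem exists_short_word_after_eq [Fintype S] [Fintype Q] (stepS : S → L → S → Prop) (s0 : S)
    (stepI : Q → L → Q → Prop) (q0 : Q) (σ : List L) :
    ∃ σ' : List L, σ'.length < 2 ^ Fintype.card S * 2 ^ Fintype.card Q ∧
      after stepS s0 σ' = after stepS s0 σ ∧ after stepI q0 σ' = after stepI q0 σ := by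
  obtain ⟨σ', hlen, heq⟩ :=
    (afterPairDFA stepS stepI).exists_length_lt_card_evalFrom_eq ({s0}, {q0}) σ
  rw [Fintype.card_prod, Fintype.card_set, Fintype.card_set] at hlen
  simp only [afterPairDFA_evalFrom, Prod.ext_iff] at heq
  simp only [after_eq_evalFrom]
  exact ⟨σ', hlen, heq⟩

def Ioco (LU : Set L) (stepI : Q → L → Q → Prop) (q0 : Q) (stepS : S → L → S → Prop) (s0 : S) :
    Prop :=
  ∀ σ ∈ otr stepS s0, outOf LU stepI (after stepI q0 σ) ⊆ outOf LU stepS (after stepS s0 σ)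

def failureTraces (LU : Set L) (stepS : S → L → S → Prop) (s0 : S) (k : ℕ) : Set (List L) :=
  {ρ | ∃ σ ∈ otr stepS s0, σ.length < k ∧
    ∃ x ∈ LU, x ∉ outOf LU stepS (after stepS s0 σ) ∧ ρ = σ ++ [x]}

theorem failureTraces_finite [Finite L] (LU : Set L) (stepS : S → L → S → Prop) (s0 : S)
    (k : ℕ) : (failureTraces LU stepS s0 k).Finite := by
  refine (List.finite_length_le L k).subset ?_
  rintro _ ⟨σ, -, hσ, x, -, -, rfl⟩
  simpa using hσ

theorem ioco_iff_otr_inter_failureTraces_eq_empty [Fintype S] [Fintype Q] (LU : Set L)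
    (stepS : S → L → S → Prop) (s0 : S) (stepI : Q → L → Q → Prop) (q0 : Q) {k : ℕ}
    (hk : 2 ^ Fintype.card S * 2 ^ Fintype.card Q ≤ k) :
    Ioco LU stepI q0 stepS s0 ↔ otr stepI q0 ∩ failureTraces LU stepS s0 k = ∅ := by
  rw [Set.eq_empty_iff_forall_notMem]
  constructor
  · rintro hioco _ ⟨hρI, σ, hσ, -, x, hxU, hxS, rfl⟩
    obtain ⟨r, hr, hx⟩ := append_singleton_mem_otr_iff.1 hρI
    exact hxS (hioco σ hσ ⟨hxU, r, hr, hx⟩)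
  · rintro hT σ hσ x ⟨hxU, r, hr, hx⟩
    by_contra hxS
    obtain ⟨σ', hlen, hS, hI⟩ := exists_short_word_after_eq stepS s0 stepI q0 σ
    refine hT (σ' ++ [x]) ⟨?_, σ', ?_, by omega, x, hxU, ?_, rfl⟩
    · exact append_singleton_mem_otr_iff.2 ⟨r, hI ▸ hr, hx⟩
    · rwa [mem_otr_iff_nonempty_after, hS]
    · rwa [hS]

end

theorem exists_finite_complete_test_suite_general {L SS : Type*} [Fintype L] [Fintype SS]
    (LU : Set L)
    (stepS : SS → L → SS → Prop) (s0 : SS)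
    (m : ℕ) :
    ∃ T : Finset (List L),
      ∀ (Q : Type) [Fintype Q], Fintype.card Q ≤ m →
        ∀ (stepI : Q → L → Q → Prop) (q0 : Q),
          ((∀ σ ∈ otr stepS s0,
              outOf LU stepI (after stepI q0 σ) ⊆ outOf LU stepS (after stepS s0 σ)) ↔
            otr stepI q0 ∩ ↑T = ∅) := by
  let k := 2 ^ Fintype.card SS * 2 ^ m
  refine ⟨(failureTraces_finite LU stepS s0 k).toFinset, fun Q _ hQ stepI q0 => ?_⟩
  rw [Set.Finite.coe_toFinset]
  have hk : 2 ^ Fintype.card SS * 2 ^ Fintype.card Q ≤ k :=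
    Nat.mul_le_mul_left _ (Nat.pow_le_pow_right two_pos hQ)
  exact ioco_iff_otr_inter_failureTraces_eq_empty LU stepS s0 stepI q0 hk

/-- for a deterministic τ-free IOLTS `S` with `n` states over a
finite alphabet `L = L_I ∪ L_U` and a bound `m ≥ 1`, there is a finite complete
test suite `T ⊆ L*` such that every τ-free IOLTS `I` with at most `m` states
satisfies: `I ioco S` iff `otr(I) ∩ T = ∅`. -/
theorem exists_finite_complete_test_suite {L SS : Type*} [Fintype L] [Fintype SS]
    (LI LU : Set L) (h_union : LI ∪ LU = Set.univ) (h_disj : LI ∩ LU = ∅)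
    (stepS : SS → L → SS → Prop) (s0 : SS)
    (hdet : ∀ s l s1 s2, stepS s l s1 → stepS s l s2 → s1 = s2)
    (n : ℕ) (hn : Fintype.card SS = n) (m : ℕ) (hm : 1 ≤ m) :
    ∃ T : Finset (List L),
      ∀ (Q : Type) [Fintype Q], Fintype.card Q ≤ m →
        ∀ (stepI : Q → L → Q → Prop) (q0 : Q),
          ((∀ σ ∈ otr stepS s0,
              outOf LU stepI (after stepI q0 σ) ⊆ outOf LU stepS (after stepS s0 σ)) ↔
            otr stepI q0 ∩ ↑T = ∅) :=
  exists_finite_complete_test_suite_general LU stepS s0 m
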